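/- Exact Laplace-mechanism leakage for extreme outcomes (binary i.i.d. database): For every y > 1, ℓ(D_1 → y) = 1/(n·b) − log( (1−p) + p·exp(1/(n·b)) ); and for every y < 0, ℓ(D_1 → y) = 1/(n·b) − log( p + (1−p)·exp(1/(n·b)) ). -/
import Mathlib


open Finset

/-- Density of the Laplace mechanism answering the counting query on a binary database:
`ρ(y|x) = (1/(2b)) exp(−|y − (x_1+⋯+x_n)/n| / b)`. -/
noncomputable def lapRhoBin {n : ℕ} (b : ℝ) (y : ℝ) (x : Fin n → Bool) : ℝ :=
  (1 / (2 * b)) * Real.exp (-(|y - (∑ j, (if x j then (1 : ℝ) else 0)) / (n : ℝ)| / b))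

/-- The i.i.d. Bernoulli(p) weight of a binary database. -/
noncomputable def bernWeight {n : ℕ} (p : ℝ) (x : Fin n → Bool) : ℝ :=
  ∏ j, (if x j then p else 1 - p)

/-- Conditional output density of the Laplace mechanism given `D_1 = d` (first entry),
for an i.i.d. Bernoulli(p) database: the expectation over the remaining entries. -/
noncomputable def lapCondBin (n : ℕ) (hn : 1 ≤ n) (b : ℝ) (p : ℝ) (y : ℝ) (d : Bool) : ℝ :=
  ∑ x ∈ Finset.univ.filter (fun x : Fin n → Bool => x ⟨0, hn⟩ = d),
    lapRhoBin b y x * ∏ j ∈ Finset.univ.erase (⟨0, hn⟩ : Fin n), (if x j then p else 1 - p)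

/-- Output marginal density of the Laplace mechanism for an i.i.d. Bernoulli(p) database. -/
noncomputable def lapMargBin (n : ℕ) (b : ℝ) (p : ℝ) (y : ℝ) : ℝ :=
  ∑ x : Fin n → Bool, lapRhoBin b y x * bernWeight p x

lemma full_sum_eq {n : ℕ} (h : Bool → ℝ) :
    ∑ x : Fin n → Bool, ∏ j, h (x j) = (h false + h true) ^ n := by
  classical
  have key := Finset.prod_univ_sum (t := fun _ : Fin n => (Finset.univ : Finset Bool))
      (f := fun _ t => h t)
  rw [Fintype.piFinset_univ] at key
  rw [← key]
  simp [Fintype.sum_bool, add_comm (h true)]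

lemma cond_sum_eq {n : ℕ} (i0 : Fin n) (h : Bool → ℝ) (d : Bool) :
    ∑ x ∈ Finset.univ.filter (fun x : Fin n → Bool => x i0 = d),
      ∏ j ∈ Finset.univ.erase i0, h (x j) = (h false + h true) ^ (n - 1) := by
  classical
  set H : Fin n → Bool → ℝ := fun j t => if j = i0 then (if t = d then 1 else 0) else h t with hH
  have lhs : ∑ x : Fin n → Bool, ∏ j, H j (x j)
      = ∑ x ∈ Finset.univ.filter (fun x : Fin n → Bool => x i0 = d),
          ∏ j ∈ Finset.univ.erase i0, h (x j) := by
    rw [Finset.sum_filter]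
    refine Finset.sum_congr rfl fun x _ => ?_
    rw [← Finset.mul_prod_erase univ (fun j => H j (x j)) (Finset.mem_univ i0)]
    have he : ∏ j ∈ univ.erase i0, H j (x j) = ∏ j ∈ univ.erase i0, h (x j) :=
      Finset.prod_congr rfl fun j hj => by
        simp [hH, (Finset.mem_erase.mp hj).1]
    rw [he]
    simp only [hH, if_pos rfl]
    by_cases hx : x i0 = d <;> simp [hx]
  have rhs : ∑ x : Fin n → Bool, ∏ j, H j (x j) = (h false + h true) ^ (n - 1) := by
    have key := Finset.prod_univ_sum (t := fun _ : Fin n => (Finset.univ : Finset Bool)) (f := H)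
    rw [Fintype.piFinset_univ] at key
    rw [← key, ← Finset.mul_prod_erase univ (fun j => ∑ t, H j t) (Finset.mem_univ i0)]
    have h1 : ∑ t, H i0 t = 1 := by
      simp only [hH, if_pos rfl]
      cases d <;> simp [Fintype.sum_bool]
    have h2 : ∏ j ∈ univ.erase i0, (∑ t, H j t) = (h false + h true) ^ (n - 1) := by
      have : ∀ j ∈ univ.erase i0, (∑ t, H j t) = h false + h true := fun j hj => by
        simp [hH, (Finset.mem_erase.mp hj).1, Fintype.sum_bool, add_comm (h true)]
      rw [Finset.prod_congr rfl this, Finset.prod_const,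
        Finset.card_erase_of_mem (Finset.mem_univ i0), Finset.card_univ, Fintype.card_fin]
    rw [h1, h2, one_mul]
  rw [← lhs, rhs]

lemma marg_eq (n : ℕ) (b p y C : ℝ) (g : Bool → ℝ)
    (hρ : ∀ x : Fin n → Bool, lapRhoBin b y x = C * ∏ j, g (x j)) :
    lapMargBin n b p y = C * ((1 - p) * g false + p * g true) ^ n := by
  classical
  simp only [lapMargBin, bernWeight, hρ]
  have step : ∀ x : Fin n → Bool,
      (C * ∏ j, g (x j)) * ∏ j, (if x j then p else 1 - p)
      = C * ∏ j, (g (x j) * (if x j then p else 1 - p)) := by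
    intro x; rw [Finset.prod_mul_distrib]; ring
  simp only [step]
  rw [← Finset.mul_sum, full_sum_eq (h := fun t => g t * (if t then p else 1 - p))]
  have : (fun t => g t * (if t then p else 1 - p)) false
      + (fun t => g t * (if t then p else 1 - p)) true = (1 - p) * g false + p * g true := by
    simp; ring
  rw [this]

lemma cond_eq (n : ℕ) (hn : 1 ≤ n) (b p y C : ℝ) (g : Bool → ℝ) (d : Bool)
    (hρ : ∀ x : Fin n → Bool, lapRhoBin b y x = C * ∏ j, g (x j)) :
    lapCondBin n hn b p y d = C * g d * ((1 - p) * g false + p * g true) ^ (n - 1) := by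
  classical
  unfold lapCondBin
  set i0 : Fin n := ⟨0, hn⟩ with hi0
  have step : ∀ x ∈ Finset.univ.filter (fun x : Fin n → Bool => x i0 = d),
      lapRhoBin b y x * ∏ j ∈ univ.erase i0, (if x j then p else 1 - p)
      = (C * g d) * ∏ j ∈ univ.erase i0, (g (x j) * (if x j then p else 1 - p)) := by
    intro x hx
    rw [Finset.mem_filter] at hx
    rw [hρ x, ← Finset.mul_prod_erase univ (fun j => g (x j)) (Finset.mem_univ i0),
      hx.2, Finset.prod_mul_distrib]
    ring
  rw [Finset.sum_congr rfl step, ← Finset.mul_sum,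
    cond_sum_eq i0 (fun t => g t * (if t then p else 1 - p)) d]
  have : (fun t => g t * (if t then p else 1 - p)) false
      + (fun t => g t * (if t then p else 1 - p)) true = (1 - p) * g false + p * g true := by
    simp; ring
  rw [this]

lemma rho_fact_high {n : ℕ} (hn : 1 ≤ n) {b : ℝ} (hb : 0 < b) {y : ℝ} (hy : 1 < y)
    (x : Fin n → Bool) :
    lapRhoBin b y x = ((1 / (2 * b)) * Real.exp (-(y / b)))
      * ∏ j, Real.exp ((if x j then (1 : ℝ) else 0) / ((n : ℝ) * b)) := by
  have hnpos : (0 : ℝ) < n := by exact_mod_cast hn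
  unfold lapRhoBin
  set s : ℝ := ∑ j, (if x j then (1 : ℝ) else 0) with hs
  have hs0 : 0 ≤ s := Finset.sum_nonneg fun j _ => by split <;> norm_num
  have hsn : s ≤ n := by
    calc s ≤ ∑ _j : Fin n, (1 : ℝ) := Finset.sum_le_sum fun j _ => by split <;> norm_num
    _ = n := by simp
  have habs : |y - s / n| = y - s / n := abs_of_nonneg (by
    have : s / n ≤ 1 := (div_le_one hnpos).mpr hsn
    linarith)
  have key : -((y - s / n) / b) = -(y / b) + ∑ j, (if x j then (1 : ℝ) else 0) / ((n : ℝ) * b) := by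
    rw [← Finset.sum_div, ← hs]
    field_simp
    ring
  rw [habs, key, Real.exp_add, Real.exp_sum]
  ring

lemma rho_fact_low {n : ℕ} (hn : 1 ≤ n) {b : ℝ} (hb : 0 < b) {y : ℝ} (hy : y < 0)
    (x : Fin n → Bool) :
    lapRhoBin b y x = ((1 / (2 * b)) * Real.exp (y / b))
      * ∏ j, Real.exp (-((if x j then (1 : ℝ) else 0) / ((n : ℝ) * b))) := by
  have hnpos : (0 : ℝ) < n := by exact_mod_cast hn
  unfold lapRhoBin
  set s : ℝ := ∑ j, (if x j then (1 : ℝ) else 0) with hs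
  have hs0 : 0 ≤ s := Finset.sum_nonneg fun j _ => by split <;> norm_num
  have habs : |y - s / n| = -(y - s / n) := abs_of_nonpos (by
    have : 0 ≤ s / n := div_nonneg hs0 hnpos.le
    linarith)
  have key : -(-(y - s / n) / b)
      = y / b + ∑ j, -((if x j then (1 : ℝ) else 0) / ((n : ℝ) * b)) := by
    rw [Finset.sum_neg_distrib, ← Finset.sum_div, ← hs]
    field_simp
    ring
  rw [habs, key, Real.exp_add, Real.exp_sum]
  ring

/-- **Exact Laplace-mechanism leakage for extreme outcomes (binary i.i.d. database).**
For `y > 1`, `ℓ(D_1 → y) = 1/(nb) − log((1−p) + p e^{1/(nb)})`, and for `y < 0`,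
`ℓ(D_1 → y) = 1/(nb) − log(p + (1−p) e^{1/(nb)})`, where
`ℓ(D_1 → y) = log (max_d ρ_1(y|d) / ρ_Y(y))`. -/
theorem laplace_extreme_outcome_leakage
    (n : ℕ) (hn : 1 ≤ n) (b : ℝ) (hb : 0 < b) (p : ℝ) (hp0 : 0 < p) (hp1 : p < 1) :
    (∀ y : ℝ, 1 < y →
      Real.log
          ((Finset.univ.sup' Finset.univ_nonempty (lapCondBin n hn b p y)) /
            lapMargBin n b p y) =
        1 / ((n : ℝ) * b) - Real.log ((1 - p) + p * Real.exp (1 / ((n : ℝ) * b)))) ∧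
    (∀ y : ℝ, y < 0 →
      Real.log
          ((Finset.univ.sup' Finset.univ_nonempty (lapCondBin n hn b p y)) /
            lapMargBin n b p y) =
        1 / ((n : ℝ) * b) - Real.log (p + (1 - p) * Real.exp (1 / ((n : ℝ) * b)))) := by
  have hnpos : (0 : ℝ) < n := by exact_mod_cast hn
  have hnb : (0 : ℝ) < (n : ℝ) * b := mul_pos hnpos hb
  set c : ℝ := 1 / ((n : ℝ) * b) with hc
  have hcpos : 0 < c := by positivity
  constructor
  · intro y hy
    set C : ℝ := (1 / (2 * b)) * Real.exp (-(y / b)) with hC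
    have hCpos : 0 < C := by positivity
    set g : Bool → ℝ := fun t => Real.exp ((if t then (1 : ℝ) else 0) / ((n : ℝ) * b)) with hg
    have hgf : g false = 1 := by simp [hg]
    have hgt : g true = Real.exp c := by simp [hg, hc]
    have hfact : ∀ x : Fin n → Bool, lapRhoBin b y x = C * ∏ j, g (x j) :=
      fun x => rho_fact_high hn hb hy x
    set S : ℝ := (1 - p) + p * Real.exp c with hS
    have hSpos : 0 < S := by
      have := Real.exp_pos c
      have : 0 < p * Real.exp c := mul_pos hp0 (Real.exp_pos c)
      nlinarith
    have hSg : (1 - p) * g false + p * g true = S := by rw [hgf, hgt, hS]; ring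
    have hmarg : lapMargBin n b p y = C * S ^ n := by
      rw [marg_eq n b p y C g hfact, hSg]
    have hcond : ∀ d, lapCondBin n hn b p y d = C * g d * S ^ (n - 1) := by
      intro d; rw [cond_eq n hn b p y C g d hfact, hSg]
    have hE1 : (1 : ℝ) ≤ Real.exp c := Real.one_le_exp hcpos.le
    have hsup : Finset.univ.sup' Finset.univ_nonempty (lapCondBin n hn b p y)
        = lapCondBin n hn b p y true := by
      apply le_antisymm
      · refine Finset.sup'_le _ _ fun d _ => ?_
        cases d
        · rw [hcond false, hcond true, hgf, hgt]
          have hP : 0 < S ^ (n - 1) := pow_pos hSpos _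
          nlinarith [mul_nonneg (mul_pos hCpos hP).le (sub_nonneg.mpr hE1)]
        · exact le_refl _
      · exact Finset.le_sup' _ (Finset.mem_univ true)
    rw [hsup, hcond true, hgt, hmarg]
    have hpow : S ^ n = S ^ (n - 1) * S := by
      conv_lhs => rw [← Nat.sub_add_cancel hn]
      rw [pow_succ]
    rw [hpow]
    have hP : S ^ (n - 1) ≠ 0 := (pow_pos hSpos _).ne'
    have hratio : C * Real.exp c * S ^ (n - 1) / (C * (S ^ (n - 1) * S)) = Real.exp c / S := by
      field_simp
    rw [hratio, Real.log_div (Real.exp_ne_zero c) hSpos.ne', Real.log_exp]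
  · intro y hy
    set C : ℝ := (1 / (2 * b)) * Real.exp (y / b) with hC
    have hCpos : 0 < C := by positivity
    set g : Bool → ℝ := fun t => Real.exp (-((if t then (1 : ℝ) else 0) / ((n : ℝ) * b))) with hg
    have hgf : g false = 1 := by simp [hg]
    have hgt : g true = Real.exp (-c) := by simp [hg, hc]
    have hfact : ∀ x : Fin n → Bool, lapRhoBin b y x = C * ∏ j, g (x j) :=
      fun x => rho_fact_low hn hb hy x
    set S : ℝ := (1 - p) + p * Real.exp (-c) with hS
    have hSpos : 0 < S := by
      have : 0 < p * Real.exp (-c) := mul_pos hp0 (Real.exp_pos _)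
      nlinarith
    have hSg : (1 - p) * g false + p * g true = S := by rw [hgf, hgt, hS]; ring
    have hmarg : lapMargBin n b p y = C * S ^ n := by
      rw [marg_eq n b p y C g hfact, hSg]
    have hcond : ∀ d, lapCondBin n hn b p y d = C * g d * S ^ (n - 1) := by
      intro d; rw [cond_eq n hn b p y C g d hfact, hSg]
    have hE1 : Real.exp (-c) ≤ 1 := Real.exp_le_one_iff.mpr (by linarith)
    have hsup : Finset.univ.sup' Finset.univ_nonempty (lapCondBin n hn b p y)
        = lapCondBin n hn b p y false := by
      apply le_antisymm
      · refine Finset.sup'_le _ _ fun d _ => ?_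
        cases d
        · exact le_refl _
        · rw [hcond false, hcond true, hgf, hgt]
          have hP : 0 < S ^ (n - 1) := pow_pos hSpos _
          nlinarith [mul_nonneg (mul_pos hCpos hP).le (sub_nonneg.mpr hE1)]
      · exact Finset.le_sup' _ (Finset.mem_univ false)
    rw [hsup, hcond false, hgf, hmarg]
    have hpow : S ^ n = S ^ (n - 1) * S := by
      conv_lhs => rw [← Nat.sub_add_cancel hn]
      rw [pow_succ]
    rw [hpow]
    have hP : S ^ (n - 1) ≠ 0 := (pow_pos hSpos _).ne'
    have hratio : C * 1 * S ^ (n - 1) / (C * (S ^ (n - 1) * S)) = 1 / S := by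
      field_simp
    rw [hratio, Real.log_div one_ne_zero hSpos.ne', Real.log_one]
    have hT : 0 < p + (1 - p) * Real.exp c :=
      add_pos hp0 (mul_pos (by linarith) (Real.exp_pos _))
    have hfac : S = Real.exp (-c) * (p + (1 - p) * Real.exp c) := by
      rw [hS, Real.exp_neg]
      have he : Real.exp c ≠ 0 := Real.exp_ne_zero c
      field_simp
      ring
    rw [hfac, Real.log_mul (Real.exp_ne_zero _) hT.ne', Real.log_exp]
    ring
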